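/- Let a, b, c ∈ ℝ and φ(x,y) = x²y + y³ + ax + by + cy². Suppose φ has four pairwise distinct critical points in ℝ², each of which is nondegenerate. Then these are all the critical points of φ; exactly one of them has Morse index 0 (a local minimum), exactly one has Morse index 2 (a local maximum), and exactly two have Morse index 1 (saddle points); moreover, the open line segment joining the local minimum point to the local maximum point intersects the open line segment joining the two saddle points. -/

import Mathlib

open MvPolynomial Matrix

/-- The Hessian matrix of a polynomial in two real variables at a point. -/
noncomputable def hess2 (f : MvPolynomial (Fin 2) ℝ) (p : Fin 2 → ℝ) :
    Matrix (Fin 2) (Fin 2) ℝ :=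
  Matrix.of fun i j => eval p (pderiv i (pderiv j f))

/-- A point of ℝ² is a critical point of a polynomial in two variables if both
partial derivatives vanish there. -/
def IsCriticalPt2 (f : MvPolynomial (Fin 2) ℝ) (p : Fin 2 → ℝ) : Prop :=
  ∀ i, eval p (pderiv i f) = 0

/-- The Morse index at a point: the number of negative eigenvalues (with multiplicity)
of the Hessian matrix there (junk value 0 if the Hessian is not symmetric). -/
noncomputable def morseIndex2 (f : MvPolynomial (Fin 2) ℝ) (p : Fin 2 → ℝ) : ℕ :=
  if h : (hess2 f p).IsHermitian then {i : Fin 2 | h.eigenvalues i < 0}.ncard else 0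

/-- The polynomial φ(x,y) = x²y + y³ + ax + by + cy². -/
noncomputable def phiPlus (a b c : ℝ) : MvPolynomial (Fin 2) ℝ :=
  X 0 ^ 2 * X 1 + X 1 ^ 3 + C a * X 0 + C b * X 1 + C c * X 1 ^ 2

/-!
At a critical point `2xy + a = 0` and `x² + 3y² + 2cy + b = 0`; there the Hessian
`[[2y, 2x], [2x, 6y + 2c]]` has determinant `4 (6y² + 3cy + b)`, and when this is positive the
trace has the sign of `y`.

If `a ≠ 0`, eliminating `x = -a / (2y)` shows that the ordinates of the critical points are the
roots of `12y⁴ + 8cy³ + 4by² + a²`, so four distinct critical points exhaust them. By Vieta the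
sorted roots satisfy `z₀ < z₁ < 0 < z₂ < z₃`, and since `8y (6y² + 3cy + b)` is the derivative of
the quartic, the determinant has signs `+ - - +` along them: the lowest point is the maximum, the
highest the minimum. All four points lie on the hyperbola `xy = -a/2`, the lower two on one
branch and the upper two on the other, so the chord joining the outer pair crosses the chord
joining the inner pair.

If `a = 0` the critical points lie on the axes. For `b ≥ 0` they all lie on the `y`-axis, where
there are at most two; so `b < 0`, and then they are the saddles `(±√-b, 0)` and the extrema
`(0, y₊)`, `(0, y₋)` with `y₋ < 0 < y₊`. Both segments pass through the origin.
-/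

namespace Matrix.IsHermitian

variable {A : Matrix (Fin 2) (Fin 2) ℝ}

lemma det_fin_two_eq_eigenvalues (hA : A.IsHermitian) :
    A.det = hA.eigenvalues 0 * hA.eigenvalues 1 := by
  simp [hA.det_eq_prod_eigenvalues, Fin.prod_univ_two]

lemma trace_fin_two_eq_eigenvalues (hA : A.IsHermitian) :
    A.trace = hA.eigenvalues 0 + hA.eigenvalues 1 := by
  simp [hA.trace_eq_sum_eigenvalues, Fin.sum_univ_two]

lemma ncard_neg_eigenvalues_of_det_neg (hA : A.IsHermitian) (hd : A.det < 0) :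
    {i | hA.eigenvalues i < 0}.ncard = 1 := by
  rw [hA.det_fin_two_eq_eigenvalues] at hd
  rcases lt_or_ge (hA.eigenvalues 0) 0 with h0 | h0
  · have h1 : 0 < hA.eigenvalues 1 := by nlinarith
    rw [show {i | hA.eigenvalues i < 0} = {0} by ext i; fin_cases i <;> simp [h0, h1.le]]
    exact Set.ncard_singleton 0
  · have h1 : hA.eigenvalues 1 < 0 := by nlinarith
    rw [show {i | hA.eigenvalues i < 0} = {1} by ext i; fin_cases i <;> simp [h0, h1]]
    exact Set.ncard_singleton 1

lemma ncard_neg_eigenvalues_of_det_pos_of_trace_pos (hA : A.IsHermitian) (hd : 0 < A.det)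
    (ht : 0 < A.trace) : {i | hA.eigenvalues i < 0}.ncard = 0 := by
  rw [hA.det_fin_two_eq_eigenvalues] at hd
  rw [hA.trace_fin_two_eq_eigenvalues] at ht
  have h0 : 0 < hA.eigenvalues 0 := by nlinarith
  have h1 : 0 < hA.eigenvalues 1 := by nlinarith
  rw [show {i | hA.eigenvalues i < 0} = ∅ by ext i; fin_cases i <;> simp [h0.le, h1.le]]
  exact Set.ncard_empty _

lemma ncard_neg_eigenvalues_of_det_pos_of_trace_neg (hA : A.IsHermitian) (hd : 0 < A.det)
    (ht : A.trace < 0) : {i | hA.eigenvalues i < 0}.ncard = 2 := by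
  rw [hA.det_fin_two_eq_eigenvalues] at hd
  rw [hA.trace_fin_two_eq_eigenvalues] at ht
  have h0 : hA.eigenvalues 0 < 0 := by nlinarith
  have h1 : hA.eigenvalues 1 < 0 := by nlinarith
  rw [show {i | hA.eigenvalues i < 0} = Set.univ by ext i; fin_cases i <;> simp [h0, h1]]
  simp

lemma mul_trace_pos_of_det_pos (hA : A.IsHermitian) (hd : 0 < A.det) : 0 < A 0 0 * A.trace := by
  have h10 : A 1 0 = A 0 1 := by simpa using congrFun (congrFun hA 0) 1
  rw [det_fin_two, h10] at hd
  rw [trace_fin_two]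
  nlinarith [mul_self_nonneg (A 0 0), mul_self_nonneg (A 0 1)]

end Matrix.IsHermitian

section MorseIndex

variable {f : MvPolynomial (Fin 2) ℝ} {q : Fin 2 → ℝ}

lemma morseIndex2_eq_one_of_det_neg (hH : (hess2 f q).IsHermitian) (hd : (hess2 f q).det < 0) :
    morseIndex2 f q = 1 := by
  rw [morseIndex2, dif_pos hH, hH.ncard_neg_eigenvalues_of_det_neg hd]

lemma morseIndex2_eq_zero_of_det_pos (hH : (hess2 f q).IsHermitian) (hd : 0 < (hess2 f q).det)
    (h00 : 0 < hess2 f q 0 0) : morseIndex2 f q = 0 := by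
  have ht := pos_of_mul_pos_right (hH.mul_trace_pos_of_det_pos hd) h00.le
  rw [morseIndex2, dif_pos hH, hH.ncard_neg_eigenvalues_of_det_pos_of_trace_pos hd ht]

lemma morseIndex2_eq_two_of_det_pos (hH : (hess2 f q).IsHermitian) (hd : 0 < (hess2 f q).det)
    (h00 : hess2 f q 0 0 < 0) : morseIndex2 f q = 2 := by
  have ht := neg_of_mul_pos_right (hH.mul_trace_pos_of_det_pos hd) h00.le
  rw [morseIndex2, dif_pos hH, hH.ncard_neg_eigenvalues_of_det_pos_of_trace_neg hd ht]

end MorseIndex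

structure CriticalCrossing (f : MvPolynomial (Fin 2) ℝ) (qmax s t qmin : Fin 2 → ℝ) :
    Prop where
  eq_of_isCriticalPt2 : ∀ q, IsCriticalPt2 f q → q = qmax ∨ q = s ∨ q = t ∨ q = qmin
  saddle_ne : s ≠ t
  morseIndex2_max : morseIndex2 f qmax = 2
  morseIndex2_saddle_left : morseIndex2 f s = 1
  morseIndex2_saddle_right : morseIndex2 f t = 1
  morseIndex2_min : morseIndex2 f qmin = 0
  openSegment_inter_nonempty : (openSegment ℝ qmin qmax ∩ openSegment ℝ s t).Nonempty

namespace CriticalCrossing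

variable {f : MvPolynomial (Fin 2) ℝ} {qmax s t qmin q : Fin 2 → ℝ}
  {p : Fin 4 → Fin 2 → ℝ}

lemma morseIndex2_eq_zero_iff (h : CriticalCrossing f qmax s t qmin) (hq : IsCriticalPt2 f q) :
    morseIndex2 f q = 0 ↔ q = qmin := by
  refine ⟨fun h0 => ?_, fun hq => hq ▸ h.morseIndex2_min⟩
  rcases h.eq_of_isCriticalPt2 q hq with rfl | rfl | rfl | rfl
  · simp [h.morseIndex2_max] at h0
  · simp [h.morseIndex2_saddle_left] at h0
  · simp [h.morseIndex2_saddle_right] at h0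
  · rfl

lemma morseIndex2_eq_two_iff (h : CriticalCrossing f qmax s t qmin) (hq : IsCriticalPt2 f q) :
    morseIndex2 f q = 2 ↔ q = qmax := by
  refine ⟨fun h2 => ?_, fun hq => hq ▸ h.morseIndex2_max⟩
  rcases h.eq_of_isCriticalPt2 q hq with rfl | rfl | rfl | rfl
  · rfl
  · simp [h.morseIndex2_saddle_left] at h2
  · simp [h.morseIndex2_saddle_right] at h2
  · simp [h.morseIndex2_min] at h2

lemma morseIndex2_eq_one_iff (h : CriticalCrossing f qmax s t qmin) (hq : IsCriticalPt2 f q) :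
    morseIndex2 f q = 1 ↔ q = s ∨ q = t := by
  refine ⟨fun h1 => ?_, ?_⟩
  · rcases h.eq_of_isCriticalPt2 q hq with rfl | rfl | rfl | rfl
    · simp [h.morseIndex2_max] at h1
    · exact Or.inl rfl
    · exact Or.inr rfl
    · simp [h.morseIndex2_min] at h1
  · rintro (rfl | rfl)
    exacts [h.morseIndex2_saddle_left, h.morseIndex2_saddle_right]

lemma range_eq (h : CriticalCrossing f qmax s t qmin) (hp : Function.Injective p)
    (hcrit : ∀ k, IsCriticalPt2 f (p k)) : Set.range p = {qmax, s, t, qmin} := by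
  refine Set.eq_of_subset_of_ncard_le ?_ ?_ (Set.toFinite _)
  · rintro _ ⟨k, rfl⟩
    simpa using h.eq_of_isCriticalPt2 _ (hcrit k)
  · rw [Set.ncard_range_of_injective hp, Nat.card_eq_fintype_card, Fintype.card_fin]
    classical
    simpa using (Set.ncard_coe_finset {qmax, s, t, qmin}).trans_le Finset.card_le_four

theorem four_critical_points (h : CriticalCrossing f qmax s t qmin) (hp : Function.Injective p)
    (hcrit : ∀ k, IsCriticalPt2 f (p k)) :
    (∀ q, IsCriticalPt2 f q → ∃ k, q = p k) ∧
    {k : Fin 4 | morseIndex2 f (p k) = 0}.ncard = 1 ∧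
    {k : Fin 4 | morseIndex2 f (p k) = 2}.ncard = 1 ∧
    {k : Fin 4 | morseIndex2 f (p k) = 1}.ncard = 2 ∧
    (∀ kmin kmax k l : Fin 4,
      morseIndex2 f (p kmin) = 0 →
      morseIndex2 f (p kmax) = 2 →
      k ≠ l →
      morseIndex2 f (p k) = 1 →
      morseIndex2 f (p l) = 1 →
      (openSegment ℝ (p kmin) (p kmax) ∩ openSegment ℝ (p k) (p l)).Nonempty) := by
  have hrange := h.range_eq hp hcrit
  have ncard_preimage (S : Set (Fin 2 → ℝ)) (hS : S ⊆ {qmax, s, t, qmin}) :=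
    Set.ncard_preimage_of_injective_subset_range hp (hrange ▸ hS)
  refine ⟨fun q hq => ?_, ?_, ?_, ?_, ?_⟩
  · obtain ⟨k, hk⟩ : q ∈ Set.range p := by simpa [hrange] using h.eq_of_isCriticalPt2 q hq
    exact ⟨k, hk.symm⟩
  · simp_rw [h.morseIndex2_eq_zero_iff (hcrit _)]
    exact (ncard_preimage {qmin} (by simp)).trans (Set.ncard_singleton _)
  · simp_rw [h.morseIndex2_eq_two_iff (hcrit _)]
    exact (ncard_preimage {qmax} (by simp)).trans (Set.ncard_singleton _)
  · simp_rw [h.morseIndex2_eq_one_iff (hcrit _)]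
    exact (ncard_preimage {s, t} (by simp [Set.insert_subset_iff])).trans
      (Set.ncard_pair h.saddle_ne)
  · intro kmin kmax k l hmin hmax hkl hk hl
    rw [(h.morseIndex2_eq_zero_iff (hcrit _)).mp hmin, (h.morseIndex2_eq_two_iff (hcrit _)).mp hmax]
    have hkl' : p k ≠ p l := hp.ne hkl
    rcases (h.morseIndex2_eq_one_iff (hcrit _)).mp hk with hk | hk <;>
      rcases (h.morseIndex2_eq_one_iff (hcrit _)).mp hl with hl | hl <;>
      rw [hk, hl] at hkl' ⊢
    · exact absurd rfl hkl'
    · exact h.openSegment_inter_nonempty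
    · exact openSegment_symm ℝ s t ▸ h.openSegment_inter_nonempty
    · exact absurd rfl hkl'

end CriticalCrossing

lemma eq_or_eq_or_eq_of_quadratic_eq_zero {A B C u v w : ℝ} (hA : A ≠ 0)
    (hu : A * u ^ 2 + B * u + C = 0) (hv : A * v ^ 2 + B * v + C = 0)
    (hw : A * w ^ 2 + B * w + C = 0) : u = v ∨ u = w ∨ v = w := by
  by_contra! h
  obtain ⟨huv, huw, hvw⟩ := h
  have hsum_v : A * (u + v) + B = 0 :=
    (mul_eq_zero.mp (by linear_combination hu - hv : (u - v) * (A * (u + v) + B) = 0)).resolve_left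
      (sub_ne_zero.mpr huv)
  have hsum_w : A * (u + w) + B = 0 :=
    (mul_eq_zero.mp (by linear_combination hu - hw : (u - w) * (A * (u + w) + B) = 0)).resolve_left
      (sub_ne_zero.mpr huw)
  exact hvw (mul_left_cancel₀ hA (by linear_combination hsum_v - hsum_w))

open Polynomial in
lemma cubic_eq_zero_of_four_roots {z : Fin 4 → ℝ} (hz : Function.Injective z)
    {α β γ δ : ℝ} (h : ∀ i, α * z i ^ 3 + β * z i ^ 2 + γ * z i + δ = 0) :
    α = 0 ∧ β = 0 ∧ γ = 0 ∧ δ = 0 := by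
  have hP : (⟨α, β, γ, δ⟩ : Cubic ℝ).toPoly = 0 :=
    eq_zero_of_natDegree_lt_card_of_eval_eq_zero _ hz (fun i => by simpa [Cubic.toPoly] using h i)
      (natDegree_cubic_le.trans_lt (by simp))
  obtain ⟨hα, hβ, hγ, hδ⟩ := Cubic.ext_iff.mp ((Cubic.toPoly_eq_zero_iff _).mp hP)
  exact ⟨hα, hβ, hγ, hδ⟩

lemma quartic_vieta {z : Fin 4 → ℝ} (hz : Function.Injective z) {A B C D E : ℝ}
    (h : ∀ i, A * z i ^ 4 + B * z i ^ 3 + C * z i ^ 2 + D * z i + E = 0) :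
    B = -A * (z 0 + z 1 + z 2 + z 3) ∧
    C = A * (z 0 * z 1 + z 0 * z 2 + z 0 * z 3 + z 1 * z 2 + z 1 * z 3 + z 2 * z 3) ∧
    D = -A * (z 0 * z 1 * z 2 + z 0 * z 1 * z 3 + z 0 * z 2 * z 3 + z 1 * z 2 * z 3) ∧
    E = A * (z 0 * z 1 * z 2 * z 3) := by
  obtain ⟨hB, hC, hD, hE⟩ := cubic_eq_zero_of_four_roots hz
    (α := B + A * (z 0 + z 1 + z 2 + z 3))
    (β := C - A * (z 0 * z 1 + z 0 * z 2 + z 0 * z 3 + z 1 * z 2 + z 1 * z 3 + z 2 * z 3))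
    (γ := D + A * (z 0 * z 1 * z 2 + z 0 * z 1 * z 3 + z 0 * z 2 * z 3 + z 1 * z 2 * z 3))
    (δ := E - A * (z 0 * z 1 * z 2 * z 3)) fun i => by
      have hprod : (z i - z 0) * (z i - z 1) * (z i - z 2) * (z i - z 3) = 0 := by
        fin_cases i <;> simp
      linear_combination h i - A * hprod
  exact ⟨by linear_combination hB, by linear_combination hC, by linear_combination hD,
    by linear_combination hE⟩

lemma exists_eq_of_quartic_eq_zero {z : Fin 4 → ℝ} (hz : Function.Injective z) {A B C D E : ℝ}
    (hA : A ≠ 0) (h : ∀ i, A * z i ^ 4 + B * z i ^ 3 + C * z i ^ 2 + D * z i + E = 0) {y : ℝ}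
    (hy : A * y ^ 4 + B * y ^ 3 + C * y ^ 2 + D * y + E = 0) : ∃ i, y = z i := by
  obtain ⟨hB, hC, hD, hE⟩ := quartic_vieta hz h
  have hprod : A * ((y - z 0) * (y - z 1) * (y - z 2) * (y - z 3)) = 0 := by
    linear_combination hy - y ^ 3 * hB - y ^ 2 * hC - y * hD - hE
  simp only [mul_eq_zero, hA, sub_eq_zero, false_or] at hprod
  rcases hprod with ((h0 | h1) | h2) | h3
  exacts [⟨0, h0⟩, ⟨1, h1⟩, ⟨2, h2⟩, ⟨3, h3⟩]

/-- The product being positive, an even number of the `z i` are negative; and neither none nor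
all of them, since `∑ 1 / z i = e₃ / e₄` vanishes. -/
lemma neg_of_strictMono_of_vieta {z : Fin 4 → ℝ} (hz : StrictMono z)
    (h3 : z 0 * z 1 * z 2 + z 0 * z 1 * z 3 + z 0 * z 2 * z 3 + z 1 * z 2 * z 3 = 0)
    (h4 : 0 < z 0 * z 1 * z 2 * z 3) : z 1 < 0 := by
  by_contra! h1
  have h2 : 0 < z 2 := h1.trans_lt (hz (by decide))
  have h3' : 0 < z 3 := h2.trans (hz (by decide))
  have h0 : 0 < z 0 := by
    by_contra! h0
    nlinarith [mul_nonpos_of_nonpos_of_nonneg h0 (mul_nonneg (mul_nonneg h1 h2.le) h3'.le)]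
  nlinarith [mul_pos (mul_pos h0 h2) h3', mul_nonneg (mul_nonneg h0.le h1) h2.le,
    mul_nonneg (mul_nonneg h0.le h1) h3'.le, mul_nonneg (mul_nonneg h1 h2.le) h3'.le]

lemma neg_pos_of_strictMono_of_vieta {z : Fin 4 → ℝ} (hz : StrictMono z)
    (h3 : z 0 * z 1 * z 2 + z 0 * z 1 * z 3 + z 0 * z 2 * z 3 + z 1 * z 2 * z 3 = 0)
    (h4 : 0 < z 0 * z 1 * z 2 * z 3) : z 1 < 0 ∧ 0 < z 2 := by
  refine ⟨neg_of_strictMono_of_vieta hz h3 h4, ?_⟩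
  have := neg_of_strictMono_of_vieta (z := fun i => -z (Fin.rev i))
    (fun i j hij => neg_lt_neg (hz (Fin.rev_lt_rev.mpr hij)))
    (by simp only [Fin.reduceRev, mul_neg, neg_mul, neg_neg]; linear_combination -h3)
    (by simp only [Fin.reduceRev, mul_neg, neg_mul, neg_neg]; linarith)
  simpa using this

lemma exists_quadratic_roots_of_neg {A B C : ℝ} (hA : 0 < A) (hC : C < 0) :
    ∃ u v : ℝ, v < 0 ∧ 0 < u ∧ B = -A * (u + v) ∧ C = A * (u * v) := by
  have hdiscr : 0 ≤ discrim A B C := by rw [discrim]; nlinarith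
  set r := √(discrim A B C)
  have hr_sq : r * r = B ^ 2 - 4 * A * C := Real.mul_self_sqrt hdiscr
  have hBr : |B| < r :=
    abs_lt_of_sq_lt_sq (by nlinarith) (Real.sqrt_nonneg _)
  refine ⟨(-B + r) / (2 * A), (-B - r) / (2 * A),
    div_neg_of_neg_of_pos (by linarith [(abs_lt.mp hBr).1]) (by positivity),
    div_pos (by linarith [(abs_lt.mp hBr).2]) (by positivity), ?_, ?_⟩
  · field_simp
    ring
  · field_simp
    linear_combination hr_sq

lemma zero_mem_openSegment_smul {E : Type*} [AddCommGroup E] [Module ℝ E] (u : E) {r t : ℝ}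
    (hr : 0 < r) (ht : t < 0) : (0 : E) ∈ openSegment ℝ (r • u) (t • u) := by
  have hrt : 0 < r - t := by linarith
  refine ⟨-t / (r - t), r / (r - t), div_pos (neg_pos.mpr ht) hrt, div_pos hr hrt,
    by field_simp; ring, ?_⟩
  rw [smul_smul, smul_smul, ← add_smul, show -t / (r - t) * r + r / (r - t) * t = 0 by ring,
    zero_smul]

/-- The points `(k / zᵢ, zᵢ)` lie on the hyperbola `x y = k`, two on each branch; the chord
joining the outer two crosses the chord joining the inner two. -/
lemma exists_hyperbola_chords_crossing {k z₀ z₁ z₂ z₃ : ℝ} (h01 : z₀ < z₁) (h1 : z₁ < 0)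
    (h2 : 0 < z₂) (h23 : z₂ < z₃) :
    ∃ lam mu : ℝ, 0 < lam ∧ lam < 1 ∧ 0 < mu ∧ mu < 1 ∧
      (1 - mu) * (k / z₁) + mu * (k / z₂) = (1 - lam) * (k / z₃) + lam * (k / z₀) ∧
      (1 - mu) * z₁ + mu * z₂ = (1 - lam) * z₃ + lam * z₀ := by
  have h0 : z₀ < 0 := h01.trans h1
  have h3 : 0 < z₃ := h2.trans h23
  have h12 : z₁ < z₂ := h1.trans h2
  obtain ⟨W, hWdef⟩ : ∃ W, W = z₁ * z₂ - z₀ * z₃ := ⟨_, rfl⟩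
  have hW : 0 < W := by rw [hWdef]; nlinarith
  have hlam_den : 0 < (z₃ - z₀) * W := mul_pos (by linarith) hW
  have hmu_den : 0 < (z₂ - z₁) * W := mul_pos (by linarith) hW
  refine ⟨-z₀ * (z₃ - z₁) * (z₃ - z₂) / ((z₃ - z₀) * W),
    z₂ * (z₁ - z₀) * (z₃ - z₁) / ((z₂ - z₁) * W),
    div_pos (mul_pos (mul_pos (by linarith) (by linarith)) (by linarith)) hlam_den,
    (div_lt_one hlam_den).mpr ?_,
    div_pos (mul_pos (mul_pos h2 (by linarith)) (by linarith)) hmu_den,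
    (div_lt_one hmu_den).mpr ?_, ?_, ?_⟩
  · have : 0 < z₃ * ((z₁ - z₀) * (z₂ - z₀)) :=
      mul_pos h3 (mul_pos (by linarith) (by linarith))
    rw [hWdef]
    linear_combination this
  · have : 0 < -z₁ * ((z₂ - z₀) * (z₃ - z₂)) :=
      mul_pos (by linarith) (mul_pos (by linarith) (by linarith))
    rw [hWdef]
    linear_combination this
  all_goals
    field_simp [hW.ne', (sub_pos.mpr h12).ne', (sub_pos.mpr (h0.trans h3)).ne', h0.ne, h1.ne,
      h2.ne', h3.ne']
    subst hWdef
    ring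

lemma openSegment_inter_nonempty_of_mul_eq {k : ℝ} {q : Fin 4 → Fin 2 → ℝ}
    (hk : ∀ i, q i 0 * q i 1 = k) (hmono : StrictMono fun i => q i 1) (h1 : q 1 1 < 0)
    (h2 : 0 < q 2 1) : (openSegment ℝ (q 3) (q 0) ∩ openSegment ℝ (q 1) (q 2)).Nonempty := by
  have hx (i : Fin 4) (hi : q i 1 ≠ 0) : q i 0 = k / q i 1 := by rw [eq_div_iff hi, hk i]
  have h01 : q 0 1 < q 1 1 := hmono (by decide)
  have h23 : q 2 1 < q 3 1 := hmono (by decide)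
  obtain ⟨lam, mu, hlam0, hlam1, hmu0, hmu1, hxeq, hyeq⟩ :=
    exists_hyperbola_chords_crossing (k := k) h01 h1 h2 h23
  refine ⟨(1 - lam) • q 3 + lam • q 0, ⟨1 - lam, lam, by linarith, hlam0, by ring, rfl⟩,
    ⟨1 - mu, mu, by linarith, hmu0, by ring, ?_⟩⟩
  ext i
  fin_cases i
  · show (1 - mu) * q 1 0 + mu * q 2 0 = (1 - lam) * q 3 0 + lam * q 0 0
    rwa [hx 0 (h01.trans h1).ne, hx 1 h1.ne, hx 2 h2.ne', hx 3 (h2.trans h23).ne']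
  · exact hyeq

section PhiPlus

variable {a b c : ℝ} {q q' : Fin 2 → ℝ}

lemma isCriticalPt2_phiPlus_iff :
    IsCriticalPt2 (phiPlus a b c) q ↔
      2 * q 0 * q 1 + a = 0 ∧ q 0 ^ 2 + 3 * q 1 ^ 2 + 2 * c * q 1 + b = 0 := by
  simp only [IsCriticalPt2, Fin.forall_fin_two]
  simp [phiPlus, pderiv_X]
  constructor <;> rintro ⟨h0, h1⟩ <;> constructor <;> linarith

lemma hess2_phiPlus : hess2 (phiPlus a b c) q = !![2 * q 1, 2 * q 0; 2 * q 0, 6 * q 1 + 2 * c] := by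
  ext i j
  fin_cases i <;> fin_cases j <;> simp [hess2, phiPlus, pderiv_X, ← map_ofNat C] <;> ring

lemma isHermitian_hess2_phiPlus : (hess2 (phiPlus a b c) q).IsHermitian := by
  rw [hess2_phiPlus]
  ext i j
  fin_cases i <;> fin_cases j <;> rfl

lemma det_hess2_phiPlus (hq : IsCriticalPt2 (phiPlus a b c) q) :
    (hess2 (phiPlus a b c) q).det = 4 * (6 * q 1 ^ 2 + 3 * c * q 1 + b) := by
  rw [hess2_phiPlus, det_fin_two_of]
  linear_combination (-4) * (isCriticalPt2_phiPlus_iff.mp hq).2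

lemma morseIndex2_phiPlus_eq_one (hq : IsCriticalPt2 (phiPlus a b c) q)
    (hD : 6 * q 1 ^ 2 + 3 * c * q 1 + b < 0) : morseIndex2 (phiPlus a b c) q = 1 :=
  morseIndex2_eq_one_of_det_neg isHermitian_hess2_phiPlus (by rw [det_hess2_phiPlus hq]; linarith)

lemma morseIndex2_phiPlus_eq_zero (hq : IsCriticalPt2 (phiPlus a b c) q)
    (hD : 0 < 6 * q 1 ^ 2 + 3 * c * q 1 + b) (hy : 0 < q 1) : morseIndex2 (phiPlus a b c) q = 0 :=
  morseIndex2_eq_zero_of_det_pos isHermitian_hess2_phiPlus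
    (by rw [det_hess2_phiPlus hq]; linarith) (by simp [hess2_phiPlus, hy])

lemma morseIndex2_phiPlus_eq_two (hq : IsCriticalPt2 (phiPlus a b c) q)
    (hD : 0 < 6 * q 1 ^ 2 + 3 * c * q 1 + b) (hy : q 1 < 0) : morseIndex2 (phiPlus a b c) q = 2 :=
  morseIndex2_eq_two_of_det_pos isHermitian_hess2_phiPlus
    (by rw [det_hess2_phiPlus hq]; linarith) (by
      simp only [hess2_phiPlus, of_apply, cons_val', cons_val_zero, cons_val_fin_one]; linarith)

lemma isCriticalPt2_phiPlus_zero_iff :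
    IsCriticalPt2 (phiPlus 0 b c) q ↔
      q 0 = 0 ∧ 3 * q 1 ^ 2 + 2 * c * q 1 + b = 0 ∨ q 1 = 0 ∧ q 0 ^ 2 + b = 0 := by
  rw [isCriticalPt2_phiPlus_iff]
  constructor
  · rintro ⟨h1, h2⟩
    rcases mul_eq_zero.mp (by linear_combination h1 / 2 : q 0 * q 1 = 0) with hx | hy
    · exact Or.inl ⟨hx, by rw [hx] at h2; linear_combination h2⟩
    · exact Or.inr ⟨hy, by rw [hy] at h2; linear_combination h2⟩
  · rintro (⟨hx, h⟩ | ⟨hy, h⟩)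
    · exact ⟨by rw [hx]; ring, by rw [hx]; linear_combination h⟩
    · exact ⟨by rw [hy]; ring, by rw [hy]; linear_combination h⟩

lemma neg_of_four_critical_points_phiPlus_zero {p : Fin 4 → Fin 2 → ℝ}
    (hinj : Function.Injective p) (hcrit : ∀ k, IsCriticalPt2 (phiPlus 0 b c) (p k)) : b < 0 := by
  by_contra! hb
  have on_axis (k : Fin 4) : p k 0 = 0 ∧ 3 * p k 1 ^ 2 + 2 * c * p k 1 + b = 0 := by
    rcases isCriticalPt2_phiPlus_zero_iff.mp (hcrit k) with h | ⟨hy, hx⟩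
    · exact h
    · have hx0 : p k 0 = 0 := pow_eq_zero_iff two_ne_zero |>.mp (by nlinarith [sq_nonneg (p k 0)])
      exact ⟨hx0, by rw [hy]; nlinarith [sq_nonneg (p k 0)]⟩
  have eq_of_snd_eq {j k : Fin 4} (h : p j 1 = p k 1) : j = k :=
    hinj (funext fun i => by fin_cases i; exacts [(on_axis j).1.trans (on_axis k).1.symm, h])
  rcases eq_or_eq_or_eq_of_quadratic_eq_zero three_ne_zero (on_axis 0).2 (on_axis 1).2
    (on_axis 2).2 with h | h | h <;> exact absurd (eq_of_snd_eq h) (by decide)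

lemma exists_criticalCrossing_phiPlus_zero (hb : b < 0) :
    ∃ qmax s t qmin, CriticalCrossing (phiPlus 0 b c) qmax s t qmin := by
  obtain ⟨ymin, ymax, hymax, hymin, hsum, hprod⟩ :=
    exists_quadratic_roots_of_neg (A := 3) (B := 2 * c) (by norm_num) hb
  have quadratic_iff (y : ℝ) : 3 * y ^ 2 + 2 * c * y + b = 0 ↔ y = ymin ∨ y = ymax := by
    rw [show 3 * y ^ 2 + 2 * c * y + b = 3 * ((y - ymin) * (y - ymax)) by
      linear_combination y * hsum + hprod]
    simp [sub_eq_zero]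
  set s := √(-b)
  have hs : 0 < s := Real.sqrt_pos.mpr (neg_pos.mpr hb)
  have sq_iff (x : ℝ) : x ^ 2 + b = 0 ↔ x = s ∨ x = -s := by
    rw [← sq_eq_sq_iff_eq_or_eq_neg, Real.sq_sqrt (neg_pos.mpr hb).le, eq_neg_iff_add_eq_zero]
  have on_y_axis {y : ℝ} (hy : y = ymin ∨ y = ymax) : IsCriticalPt2 (phiPlus 0 b c) ![0, y] :=
    isCriticalPt2_phiPlus_zero_iff.mpr (Or.inl ⟨rfl, (quadratic_iff y).mpr hy⟩)
  have on_x_axis {x : ℝ} (hx : x = s ∨ x = -s) : IsCriticalPt2 (phiPlus 0 b c) ![x, 0] :=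
    isCriticalPt2_phiPlus_zero_iff.mpr (Or.inr ⟨rfl, (sq_iff x).mpr hx⟩)
  have hgap : 0 < ymin - ymax := by linarith
  refine ⟨![0, ymax], ![s, 0], ![-s, 0], ![0, ymin],
    ⟨fun q hq => ?_, by simpa using (by linarith : s ≠ -s), ?_,
      morseIndex2_phiPlus_eq_one (on_x_axis (Or.inl rfl)) (by simpa using hb),
      morseIndex2_phiPlus_eq_one (on_x_axis (Or.inr rfl)) (by simpa using hb), ?_,
      ⟨0, by simpa using zero_mem_openSegment_smul ![(0 : ℝ), 1] hymin hymax,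
        by simpa using zero_mem_openSegment_smul ![(1 : ℝ), 0] hs (neg_neg_of_pos hs)⟩⟩⟩
  · rw [show q = ![q 0, q 1] from (FinVec.etaExpand_eq q).symm]
    rcases isCriticalPt2_phiPlus_zero_iff.mp hq with ⟨hx, hy⟩ | ⟨hy, hx⟩
    · rcases (quadratic_iff _).mp hy with hy | hy <;> simp [hx, hy]
    · rcases (sq_iff _).mp hx with hx | hx <;> simp [hx, hy]
  · refine morseIndex2_phiPlus_eq_two (on_y_axis (Or.inr rfl)) ?_ hymax
    have : 6 * ymax ^ 2 + 3 * c * ymax + b = 3 / 2 * (-ymax) * (ymin - ymax) := by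
      linear_combination (3 / 2) * ymax * hsum + hprod
    simpa [this] using mul_pos (mul_pos (by norm_num : (0 : ℝ) < 3 / 2) (neg_pos.2 hymax)) hgap
  · refine morseIndex2_phiPlus_eq_zero (on_y_axis (Or.inl rfl)) ?_ hymin
    have : 6 * ymin ^ 2 + 3 * c * ymin + b = 3 / 2 * ymin * (ymin - ymax) := by
      linear_combination (3 / 2) * ymin * hsum + hprod
    simpa [this] using mul_pos (mul_pos (by norm_num : (0 : ℝ) < 3 / 2) hymin) hgap

lemma quartic_eq_zero_of_isCriticalPt2_phiPlus (hq : IsCriticalPt2 (phiPlus a b c) q) :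
    12 * q 1 ^ 4 + 8 * c * q 1 ^ 3 + 4 * b * q 1 ^ 2 + 0 * q 1 + a ^ 2 = 0 := by
  obtain ⟨h1, h2⟩ := isCriticalPt2_phiPlus_iff.mp hq
  linear_combination (4 * q 1 ^ 2) * h2 + (a - 2 * q 0 * q 1) * h1

lemma eq_of_isCriticalPt2_phiPlus_of_snd_eq (ha : a ≠ 0) (hq : IsCriticalPt2 (phiPlus a b c) q)
    (hq' : IsCriticalPt2 (phiPlus a b c) q') (h : q 1 = q' 1) : q = q' := by
  have h1 := (isCriticalPt2_phiPlus_iff.mp hq).1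
  have h1' := (isCriticalPt2_phiPlus_iff.mp hq').1
  have hy : q 1 ≠ 0 := fun hy => ha (by rw [hy] at h1; linarith)
  have hx : q 0 = q' 0 :=
    mul_right_cancel₀ (mul_ne_zero two_ne_zero hy)
      (by rw [h] at h1 ⊢; linear_combination h1 - h1')
  ext i
  fin_cases i
  exacts [hx, h]

lemma hessian_signs_of_sorted_roots (ha : a ≠ 0) {z : Fin 4 → ℝ} (hz : StrictMono z)
    (hroot : ∀ i, 12 * z i ^ 4 + 8 * c * z i ^ 3 + 4 * b * z i ^ 2 + 0 * z i + a ^ 2 = 0) :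
    z 1 < 0 ∧ 0 < z 2 ∧ 0 < 6 * z 0 ^ 2 + 3 * c * z 0 + b ∧
      6 * z 1 ^ 2 + 3 * c * z 1 + b < 0 ∧ 6 * z 2 ^ 2 + 3 * c * z 2 + b < 0 ∧
      0 < 6 * z 3 ^ 2 + 3 * c * z 3 + b := by
  obtain ⟨h1, h2, h3, h4⟩ := quartic_vieta hz.injective hroot
  obtain ⟨hz1, hz2⟩ :=
    neg_pos_of_strictMono_of_vieta hz (by linarith) (by nlinarith [sq_pos_of_ne_zero ha])
  have d01 : 0 < z 1 - z 0 := sub_pos.2 (hz (by decide))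
  have d02 : 0 < z 2 - z 0 := sub_pos.2 (hz (by decide))
  have d03 : 0 < z 3 - z 0 := sub_pos.2 (hz (by decide))
  have d12 : 0 < z 2 - z 1 := sub_pos.2 (hz (by decide))
  have d13 : 0 < z 3 - z 1 := sub_pos.2 (hz (by decide))
  have d23 : 0 < z 3 - z 2 := sub_pos.2 (hz (by decide))
  -- `8 y (6 y² + 3 c y + b)` is the derivative of the quartic `12 ∏ (y - z j)`
  have e0 : 2 * z 0 * (6 * z 0 ^ 2 + 3 * c * z 0 + b) =
      -3 * ((z 1 - z 0) * (z 2 - z 0) * (z 3 - z 0)) := by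
    linear_combination (3 / 4) * z 0 ^ 2 * h1 + (1 / 2) * z 0 * h2 + (1 / 4) * h3
  have e1 : 2 * z 1 * (6 * z 1 ^ 2 + 3 * c * z 1 + b) =
      3 * ((z 1 - z 0) * (z 2 - z 1) * (z 3 - z 1)) := by
    linear_combination (3 / 4) * z 1 ^ 2 * h1 + (1 / 2) * z 1 * h2 + (1 / 4) * h3
  have e2 : 2 * z 2 * (6 * z 2 ^ 2 + 3 * c * z 2 + b) =
      -3 * ((z 2 - z 0) * (z 2 - z 1) * (z 3 - z 2)) := by
    linear_combination (3 / 4) * z 2 ^ 2 * h1 + (1 / 2) * z 2 * h2 + (1 / 4) * h3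
  have e3 : 2 * z 3 * (6 * z 3 ^ 2 + 3 * c * z 3 + b) =
      3 * ((z 3 - z 0) * (z 3 - z 1) * (z 3 - z 2)) := by
    linear_combination (3 / 4) * z 3 ^ 2 * h1 + (1 / 2) * z 3 * h2 + (1 / 4) * h3
  refine ⟨hz1, hz2, ?_, ?_, ?_, ?_⟩
  · nlinarith [mul_pos (mul_pos d01 d02) d03]
  · nlinarith [mul_pos (mul_pos d01 d12) d13]
  · nlinarith [mul_pos (mul_pos d02 d12) d23]
  · nlinarith [mul_pos (mul_pos d03 d13) d23]

lemma exists_criticalCrossing_phiPlus_of_ne_zero (ha : a ≠ 0) {p : Fin 4 → Fin 2 → ℝ}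
    (hinj : Function.Injective p) (hcrit : ∀ k, IsCriticalPt2 (phiPlus a b c) (p k)) :
    ∃ qmax s t qmin, CriticalCrossing (phiPlus a b c) qmax s t qmin := by
  have hsnd : Function.Injective fun k => p k 1 := fun j k h =>
    hinj (eq_of_isCriticalPt2_phiPlus_of_snd_eq ha (hcrit j) (hcrit k) h)
  set σ := Tuple.sort fun k => p k 1
  have hz : StrictMono fun i => p (σ i) 1 :=
    (Tuple.monotone_sort _).strictMono_of_injective (hsnd.comp σ.injective)
  have hroot (i : Fin 4) := quartic_eq_zero_of_isCriticalPt2_phiPlus (hcrit (σ i))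
  obtain ⟨hz1, hz2, hD0, hD1, hD2, hD3⟩ := hessian_signs_of_sorted_roots ha hz hroot
  refine ⟨p (σ 0), p (σ 1), p (σ 2), p (σ 3),
    ⟨fun q hq => ?_, hinj.ne (σ.injective.ne (by decide)),
    morseIndex2_phiPlus_eq_two (hcrit _) hD0 ((hz (by decide : (0 : Fin 4) < 1)).trans hz1),
    morseIndex2_phiPlus_eq_one (hcrit _) hD1, morseIndex2_phiPlus_eq_one (hcrit _) hD2,
    morseIndex2_phiPlus_eq_zero (hcrit _) hD3 (hz2.trans (hz (by decide))), ?_⟩⟩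
  · obtain ⟨i, hi⟩ := exists_eq_of_quartic_eq_zero hz.injective (by norm_num) hroot
      (quartic_eq_zero_of_isCriticalPt2_phiPlus hq)
    rw [eq_of_isCriticalPt2_phiPlus_of_snd_eq ha hq (hcrit (σ i)) hi]
    fin_cases i <;> simp
  · refine openSegment_inter_nonempty_of_mul_eq (k := -a / 2) (fun i => ?_) hz hz1 hz2
    linear_combination (isCriticalPt2_phiPlus_iff.mp (hcrit (σ i))).1 / 2

end PhiPlus

theorem phiPlus_four_critical_points (a b c : ℝ)
    (p : Fin 4 → (Fin 2 → ℝ)) (hinj : Function.Injective p)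
    (hcrit : ∀ k, IsCriticalPt2 (phiPlus a b c) (p k)) :
    (∀ q, IsCriticalPt2 (phiPlus a b c) q → ∃ k, q = p k) ∧
    {k : Fin 4 | morseIndex2 (phiPlus a b c) (p k) = 0}.ncard = 1 ∧
    {k : Fin 4 | morseIndex2 (phiPlus a b c) (p k) = 2}.ncard = 1 ∧
    {k : Fin 4 | morseIndex2 (phiPlus a b c) (p k) = 1}.ncard = 2 ∧
    (∀ kmin kmax s t : Fin 4,
      morseIndex2 (phiPlus a b c) (p kmin) = 0 →
      morseIndex2 (phiPlus a b c) (p kmax) = 2 →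
      s ≠ t →
      morseIndex2 (phiPlus a b c) (p s) = 1 →
      morseIndex2 (phiPlus a b c) (p t) = 1 →
      (openSegment ℝ (p kmin) (p kmax) ∩ openSegment ℝ (p s) (p t)).Nonempty) := by
  obtain ⟨qmax, s, t, qmin, h⟩ :
      ∃ qmax s t qmin, CriticalCrossing (phiPlus a b c) qmax s t qmin := by
    rcases eq_or_ne a 0 with rfl | ha
    · exact exists_criticalCrossing_phiPlus_zero
        (neg_of_four_critical_points_phiPlus_zero hinj hcrit)
    · exact exists_criticalCrossing_phiPlus_of_ne_zero ha hinj hcrit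
  exact h.four_critical_points hinj hcrit
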